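/- arXiv:2211.00101 — 4 statements merged into one kernel-verified Lean document; each statement's English description precedes it below -/
import Mathlib

section
/- Let a, b > 0 and c, x, y ≥ 0 be such that for all μ ∈ (0,1] the inequality y ≤ a·μ + (b/μ)·x + c·√x holds. Then y ≤ (2b + c·√(b/a))·x if x > a/b, and y ≤ (2√(ab) + c)·√x if x ≤ a/b. -/
/-!
For `x > a / b` take `μ = 1`: then `a < b x` and `√x ≤ √(b/a) x`. For `0 < x ≤ a / b` the
minimiser `μ = √(b x / a)` of `a μ + b x / μ` lies in `(0, 1]`, and there both terms equal
`√(a b) √x`. For `x = 0` the hypothesis reads `y ≤ a μ`, and `μ → 0⁺` gives `y ≤ 0`.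
-/

open Filter Topology

lemma le_of_forall_le_mul_add {a y z : ℝ} (h : ∀ μ : ℝ, 0 < μ → μ ≤ 1 → y ≤ a * μ + z) :
    y ≤ z := by
  have hlim : Tendsto (fun μ : ℝ => a * μ + z) (𝓝 0) (𝓝 z) :=
    (by fun_prop : Continuous fun μ : ℝ => a * μ + z).tendsto' 0 z (by simp)
  refine ge_of_tendsto (tendsto_nhdsWithin_of_tendsto_nhds (s := Set.Ioi 0) hlim) ?_
  filter_upwards [self_mem_nhdsWithin, Ioo_mem_nhdsGT one_pos] with μ hμ hμ1
  exact h μ hμ hμ1.2.le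

lemma sqrt_le_sqrt_div_mul_self {a b x : ℝ} (ha : 0 < a) (hx : 0 ≤ x) (hax : a ≤ b * x) :
    √x ≤ √(b / a) * x := by
  have hbxa : 1 ≤ b * x / a := (one_le_div ha).mpr hax
  calc √x ≤ √(b / a * x ^ 2) := Real.sqrt_le_sqrt <| by
        rw [show b / a * x ^ 2 = b * x / a * x by ring]
        nlinarith
    _ = √(b / a) * x := by
        rw [Real.sqrt_mul (div_nonneg (by nlinarith) ha.le), Real.sqrt_sq hx]

section Optimizer

variable {a b x : ℝ}

lemma mul_sqrt_mul_div_eq (ha : 0 < a) (hb : 0 ≤ b) :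
    a * √(b * x / a) = √(a * b) * √x := by
  calc a * √(b * x / a) = √(a ^ 2) * √(b * x / a) := by rw [Real.sqrt_sq ha.le]
    _ = √(a * b * x) := by
        rw [← Real.sqrt_mul (sq_nonneg a)]
        congr 1
        field_simp
    _ = √(a * b) * √x := Real.sqrt_mul (by positivity) x

lemma div_sqrt_mul_div_mul_eq (ha : 0 < a) (hb : 0 < b) (hx : 0 < x) :
    b / √(b * x / a) * x = √(a * b) * √x := by
  have hpos : 0 < √(b * x / a) := Real.sqrt_pos.mpr (by positivity)
  rw [div_mul_eq_mul_div, div_eq_iff hpos.ne', ← mul_sqrt_mul_div_eq ha hb.le,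
    mul_assoc, Real.mul_self_sqrt (by positivity)]
  field_simp

end Optimizer

theorem est_split_general (a b c x y : ℝ) (ha : 0 < a) (hb : 0 < b)
    (hc : 0 ≤ c) (hx : 0 ≤ x)
    (h : ∀ μ : ℝ, 0 < μ → μ ≤ 1 → y ≤ a * μ + (b / μ) * x + c * Real.sqrt x) :
    (x > a / b → y ≤ (2 * b + c * Real.sqrt (b / a)) * x) ∧
    (x ≤ a / b → y ≤ (2 * Real.sqrt (a * b) + c) * Real.sqrt x) := by
  constructor
  · intro hxab
    have hax : a < b * x := (div_lt_iff₀' hb).mp hxab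
    calc y ≤ a * 1 + (b / 1) * x + c * √x := h 1 one_pos le_rfl
      _ ≤ b * x + b * x + c * (√(b / a) * x) := by
          rw [mul_one, div_one]
          exact add_le_add (add_le_add hax.le le_rfl)
            (mul_le_mul_of_nonneg_left (sqrt_le_sqrt_div_mul_self ha hx hax.le) hc)
      _ = (2 * b + c * √(b / a)) * x := by ring
  · intro hxab
    rcases hx.eq_or_lt with rfl | hx0
    · simpa using le_of_forall_le_mul_add (z := 0) fun μ hμ hμ1 => by simpa using h μ hμ hμ1
    · have hμ1 : √(b * x / a) ≤ 1 :=
        Real.sqrt_le_one.mpr <| (div_le_one ha).mpr <| by rwa [le_div_iff₀' hb] at hxab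
      calc y ≤ a * √(b * x / a) + (b / √(b * x / a)) * x + c * √x :=
            h _ (Real.sqrt_pos.mpr (by positivity)) hμ1
        _ = (2 * √(a * b) + c) * √x := by
            rw [mul_sqrt_mul_div_eq ha hb.le, div_sqrt_mul_div_mul_eq ha hb hx0]
            ring

theorem est_split (a b c x y : ℝ) (ha : 0 < a) (hb : 0 < b)
    (hc : 0 ≤ c) (hx : 0 ≤ x) (hy : 0 ≤ y)
    (h : ∀ μ : ℝ, 0 < μ → μ ≤ 1 → y ≤ a * μ + (b / μ) * x + c * Real.sqrt x) :
    (x > a / b → y ≤ (2 * b + c * Real.sqrt (b / a)) * x) ∧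
    (x ≤ a / b → y ≤ (2 * Real.sqrt (a * b) + c) * Real.sqrt x) :=
  est_split_general a b c x y ha hb hc hx h
end

section
/- Under the hypotheses of the split inequality lemma (y ≤ aμ + (b/μ)x + c√x for all μ ∈ (0,1], with a,b > 0, c,x,y ≥ 0), the equivalent lower bound on x holds: x ≥ (2b + c·√(b/a))⁻¹·y if y > 2a + c·√(a/b), and x ≥ (2√(ab) + c)⁻²·y² if y ≤ 2a + c·√(a/b). -/
/-!
Write `a = p²`, `b = q²`, `x = t²`. For `t ≤ p / q` the choice `μ = q t / p ∈ (0, 1]`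
balances the first two terms of the hypothesis (AM-GM), giving `y ≤ (2 p q + c) t`.
If `y > (2 p q + c) p / q` this forces `t > p / q`, and then `μ = 1` gives
`y ≤ p² + q² t² + c t ≤ (2 q² + c q / p) t²`. If `y ≤ (2 p q + c) p / q`, then
`y ≤ (2 p q + c) t` in both cases `t ≤ p / q` and `t > p / q`, and squaring gives the claim.
-/

namespace SplitInequality

variable {p q c t y : ℝ}

lemma nonpos_of_forall_le_mul {k : ℝ} (h : ∀ μ : ℝ, 0 < μ → μ ≤ 1 → y ≤ k * μ) :
    y ≤ 0 := by
  have hlim : Filter.Tendsto (fun μ : ℝ => k * μ) (nhdsWithin 0 (Set.Ioi 0)) (nhds 0) := by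
    simpa using ((continuous_const_mul k).tendsto' 0 (k * 0) rfl).mono_left nhdsWithin_le_nhds
  refine ge_of_tendsto hlim ?_
  filter_upwards [Ioc_mem_nhdsGT one_pos] with μ hμ using h μ hμ.1 hμ.2

variable (hp : 0 < p) (hq : 0 < q) (hc : 0 ≤ c) (ht : 0 ≤ t)
  (h : ∀ μ : ℝ, 0 < μ → μ ≤ 1 → y ≤ p ^ 2 * μ + (q ^ 2 / μ) * t ^ 2 + c * t)
include hp hq ht h

lemma le_mul_of_le_div (hpq : t ≤ p / q) : y ≤ (2 * (p * q) + c) * t := by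
  rcases ht.eq_or_lt with rfl | ht0
  · simp only [mul_zero]
    exact nonpos_of_forall_le_mul fun μ hμ hμ1 => by simpa using h μ hμ hμ1
  have hμ1 : q * t / p ≤ 1 := by
    rw [div_le_one hp]
    rwa [le_div_iff₀ hq, mul_comm] at hpq
  calc y ≤ p ^ 2 * (q * t / p) + (q ^ 2 / (q * t / p)) * t ^ 2 + c * t :=
        h _ (by positivity) hμ1
    _ = (2 * (p * q) + c) * t := by field_simp; ring

include hc

lemma le_mul_sq_of_lt (hy : 2 * p ^ 2 + c * (p / q) < y) :
    y ≤ (2 * q ^ 2 + c * (q / p)) * t ^ 2 := by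
  have hpt : p / q < t := by
    by_contra! hle
    have : y ≤ 2 * p ^ 2 + c * (p / q) :=
      calc y ≤ (2 * (p * q) + c) * t := le_mul_of_le_div hp hq ht h hle
        _ ≤ (2 * (p * q) + c) * (p / q) := by gcongr
        _ = 2 * p ^ 2 + c * (p / q) := by field_simp
    linarith
  have hpt' : p < q * t := by rwa [div_lt_iff₀ hq, mul_comm] at hpt
  have hp2 : p ^ 2 ≤ q ^ 2 * t ^ 2 := by
    rw [← mul_pow]
    exact pow_le_pow_left₀ hp.le hpt'.le 2
  have htq : t ≤ q / p * t ^ 2 := by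
    rw [div_mul_eq_mul_div, le_div_iff₀ hp]
    nlinarith
  calc y ≤ p ^ 2 * 1 + (q ^ 2 / 1) * t ^ 2 + c * t := h 1 one_pos le_rfl
    _ ≤ q ^ 2 * t ^ 2 + q ^ 2 * t ^ 2 + c * (q / p * t ^ 2) := by
        rw [mul_one, div_one]
        gcongr
    _ = (2 * q ^ 2 + c * (q / p)) * t ^ 2 := by ring

lemma sq_le_mul_sq (hy0 : 0 ≤ y) (hy : y ≤ 2 * p ^ 2 + c * (p / q)) :
    y ^ 2 ≤ (2 * (p * q) + c) ^ 2 * t ^ 2 := by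
  have hDt : y ≤ (2 * (p * q) + c) * t := by
    rcases le_or_gt t (p / q) with hpt | hpt
    · exact le_mul_of_le_div hp hq ht h hpt
    · calc y ≤ 2 * p ^ 2 + c * (p / q) := hy
        _ = (2 * (p * q) + c) * (p / q) := by field_simp
        _ ≤ (2 * (p * q) + c) * t := by gcongr
  rw [← mul_pow]
  exact pow_le_pow_left₀ hy0 hDt 2

end SplitInequality

open SplitInequality in
theorem est_split_inverse (a b c x y : ℝ) (ha : 0 < a) (hb : 0 < b)
    (hc : 0 ≤ c) (hx : 0 ≤ x) (hy : 0 ≤ y)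
    (h : ∀ μ : ℝ, 0 < μ → μ ≤ 1 → y ≤ a * μ + (b / μ) * x + c * Real.sqrt x) :
    (y > 2 * a + c * Real.sqrt (a / b) → x ≥ (2 * b + c * Real.sqrt (b / a))⁻¹ * y) ∧
    (y ≤ 2 * a + c * Real.sqrt (a / b) → x ≥ ((2 * Real.sqrt (a * b) + c) ^ 2)⁻¹ * y ^ 2) := by
  obtain ⟨p, hp, rfl⟩ : ∃ p, 0 < p ∧ p ^ 2 = a := ⟨√a, Real.sqrt_pos.2 ha, Real.sq_sqrt ha.le⟩
  obtain ⟨q, hq, rfl⟩ : ∃ q, 0 < q ∧ q ^ 2 = b := ⟨√b, Real.sqrt_pos.2 hb, Real.sq_sqrt hb.le⟩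
  obtain ⟨t, ht, rfl⟩ : ∃ t, 0 ≤ t ∧ t ^ 2 = x := ⟨√x, Real.sqrt_nonneg x, Real.sq_sqrt hx⟩
  rw [← mul_pow, ← div_pow, ← div_pow, Real.sqrt_sq (by positivity), Real.sqrt_sq (by positivity),
    Real.sqrt_sq (by positivity)]
  rw [Real.sqrt_sq ht] at h
  constructor
  · intro hy1
    rw [ge_iff_le, inv_mul_le_iff₀ (by positivity)]
    exact le_mul_sq_of_lt hp hq hc ht h hy1
  · intro hy2
    rw [ge_iff_le, inv_mul_le_iff₀ (by positivity)]
    exact sq_le_mul_sq hp hq hc ht h hy hy2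
end

section
/- Let D : V → ℝ be convex and let p^{n+1} = (1-σM)p^n + σ·∑_{i=1}^M p̃_i with σ ∈ (0, 1/M], where each p̃_i ∈ V satisfies D(p^n) - D(p̃_i) ≥ ρ·(D(p^n) - D(p̂_i)) for some ρ ∈ (0,1] and elements p̂_i ∈ V. Then D(p^n) - D(p^{n+1}) ≥ ρσ·∑_{i=1}^M (D(p^n) - D(p̂_i)). -/
theorem parallel_step_decrease
    {V : Type*} [NormedAddCommGroup V] [NormedSpace ℝ V]
    (D : V → ℝ) (hconv : ConvexOn ℝ Set.univ D)
    (M : ℕ) (hM : 0 < M)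
    (σ ρ : ℝ) (hσ : 0 < σ) (hσM : σ ≤ 1 / M)
    (hρ : 0 < ρ) (hρ1 : ρ ≤ 1)
    (pn : V) (ptilde phat : Fin M → V)
    (happrox : ∀ i, D pn - D (ptilde i) ≥ ρ * (D pn - D (phat i)))
    (pnext : V)
    (hupdate : pnext = (1 - σ * M) • pn + σ • ∑ i, ptilde i) :
    D pn - D pnext ≥ ρ * σ * ∑ i, (D pn - D (phat i)) := by
  have hMpos : (0:ℝ) < M := by exact_mod_cast hM
  have hσM1 : σ * M ≤ 1 := by
    rw [le_div_iff₀ hMpos] at hσM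
    exact hσM
  -- Jensen with weights over Option (Fin M)
  set w : Option (Fin M) → ℝ := fun o => o.elim (1 - σ * M) (fun _ => σ) with hw
  set z : Option (Fin M) → V := fun o => o.elim pn ptilde with hz
  have h₀ : ∀ o ∈ (Finset.univ : Finset (Option (Fin M))), 0 ≤ w o := by
    intro o _
    cases o with
    | none => simpa [hw] using sub_nonneg.2 hσM1
    | some i => exact le_of_lt hσ
  have h₁ : ∑ o : Option (Fin M), w o = 1 := by
    rw [Fintype.sum_option]
    simp [hw, Finset.card_univ]
    ring
  have hmem : ∀ o ∈ (Finset.univ : Finset (Option (Fin M))), z o ∈ (Set.univ : Set V) := by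
    intro o _; trivial
  have hjensen := hconv.map_sum_le h₀ h₁ hmem
  have hsum : ∑ o : Option (Fin M), w o • z o = pnext := by
    rw [hupdate, Fintype.sum_option]
    simp [hw, hz, Finset.smul_sum]
  rw [hsum] at hjensen
  have hjensen' : D pnext ≤ (1 - σ * M) * D pn + σ * ∑ i, D (ptilde i) := by
    rw [Fintype.sum_option] at hjensen
    simpa [hw, hz, Finset.mul_sum] using hjensen
  have key : σ * ∑ i, (D pn - D (ptilde i)) ≤ D pn - D pnext := by
    have : ∑ i, (D pn - D (ptilde i)) = M * D pn - ∑ i, D (ptilde i) := by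
      simp [Finset.sum_sub_distrib, Finset.card_univ]
    rw [this]
    nlinarith [hjensen']
  have step2 : ρ * σ * ∑ i, (D pn - D (phat i)) ≤ σ * ∑ i, (D pn - D (ptilde i)) := by
    have h : ∑ i, ρ * (D pn - D (phat i)) ≤ ∑ i, (D pn - D (ptilde i)) :=
      Finset.sum_le_sum (fun i _ => happrox i)
    rw [← Finset.mul_sum] at h
    calc ρ * σ * ∑ i, (D pn - D (phat i)) = σ * (ρ * ∑ i, (D pn - D (phat i))) := by ring
      _ ≤ σ * ∑ i, (D pn - D (ptilde i)) := mul_le_mul_of_nonneg_left h (le_of_lt hσ)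
  linarith
end

section
/- In the setting of Theorem 6.2: if p^{n+1} = p^n - τ(ξⁿ + (|ξⁿ|_F/λ)p^{n+1}) with ξⁿ = D'(pⁿ) (pointwise), |p^{n+1}|_F ≤ λ, and τ·‖Λ°B⁻¹Λ*‖ < 1, then the energy decrease estimate D(pⁿ) - D(p^{n+1}) ≥ (1/(2τ))·(1 - τ‖Λ°B⁻¹Λ*‖)·‖pⁿ - p^{n+1}‖² holds. -/
open scoped RealInnerProductSpace

/-!
With `δ = p⁰ - p¹`, the quadratic `D` expands exactly as `D p⁰ - D p¹ = ⟪ξ, δ⟫ - ½⟪A δ, δ⟫`.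
The update gives `δ x - τ ξ x = τ (|ξ x| / λ) p¹ x` at each point, and feasibility `|p¹ x| ≤ λ`
bounds its norm by `τ |ξ x|`; so `δ` lies in the ball of radius `‖τ ξ‖` around `τ ξ`, which is
equivalent to `‖δ‖² ≤ 2τ ⟪ξ, δ⟫`. Together with `⟪A δ, δ⟫ ≤ ‖A‖ ‖δ‖²` this is the estimate.
-/

section InnerProductSpace

variable {E : Type*} [NormedAddCommGroup E] [InnerProductSpace ℝ E]

theorem norm_sq_le_two_mul_inner_of_norm_sub_le {u δ : E} (h : ‖δ - u‖ ≤ ‖u‖) :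
    ‖δ‖ ^ 2 ≤ 2 * ⟪u, δ⟫ := by
  have hsq : ‖δ - u‖ ^ 2 ≤ ‖u‖ ^ 2 := pow_le_pow_left₀ (norm_nonneg _) h 2
  rw [norm_sub_sq_real, real_inner_comm] at hsq
  linarith

theorem inner_apply_self_le_opNorm_mul_norm_sq (A : E →L[ℝ] E) (x : E) :
    ⟪A x, x⟫ ≤ ‖A‖ * ‖x‖ ^ 2 :=
  calc ⟪A x, x⟫ ≤ ‖A x‖ * ‖x‖ := real_inner_le_norm _ _
    _ ≤ ‖A‖ * ‖x‖ * ‖x‖ := by gcongr; exact A.le_opNorm x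
    _ = ‖A‖ * ‖x‖ ^ 2 := by ring

theorem LinearMap.IsSymmetric.quadratic_sub_eq {A : E →L[ℝ] E}
    (hA : (A : E →ₗ[ℝ] E).IsSymmetric) (h : E) (c : ℝ) {D : E → ℝ} (hD : ∀ p, D p = (1 / 2) * ⟪A p, p⟫ - ⟪h, p⟫ + c) (p q : E) :
    D p - D q = ⟪A p - h, p - q⟫ - (1 / 2) * ⟪A (p - q), p - q⟫ := by
  have hpq : ⟪A q, p⟫ = ⟪A p, q⟫ := by rw [← A.coe_coe, hA, real_inner_comm]
  simp only [hD, map_sub, inner_sub_left, inner_sub_right, hpq]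
  ring

theorem norm_sub_smul_le_of_semiImplicit_step {p q ξ : E} {lam τ : ℝ} (hlam : 0 < lam)
    (hτ : 0 ≤ τ) (hstep : q = p - τ • (ξ + (‖ξ‖ / lam) • q)) (hq : ‖q‖ ≤ lam) :
    ‖p - q - τ • ξ‖ ≤ ‖τ • ξ‖ := by
  have hdiff : p - q - τ • ξ = (τ * (‖ξ‖ / lam)) • q := by
    conv_lhs => rw [hstep]
    rw [smul_add, mul_smul]
    abel
  rw [hdiff, norm_smul, norm_smul, Real.norm_of_nonneg hτ,
    Real.norm_of_nonneg (by positivity), mul_assoc]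
  gcongr
  calc ‖ξ‖ / lam * ‖q‖ ≤ ‖ξ‖ / lam * lam := by gcongr
    _ = ‖ξ‖ := div_mul_cancel₀ _ hlam.ne'

end InnerProductSpace

theorem PiLp.norm_le_norm_of_forall {ι : Type*} [Fintype ι] {β : ι → Type*}
    [∀ i, SeminormedAddCommGroup (β i)] {x y : PiLp 2 β} (h : ∀ i, ‖x i‖ ≤ ‖y i‖) :
    ‖x‖ ≤ ‖y‖ := by
  rw [PiLp.norm_eq_of_L2, PiLp.norm_eq_of_L2]
  gcongr with i
  exact h i

theorem chambolle_energy_decrease_general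
    (Ω : Type*) [Fintype Ω] (d m : ℕ)
    (A : PiLp 2 (fun _ : Ω => EuclideanSpace ℝ (Fin d × Fin m)) →L[ℝ]
         PiLp 2 (fun _ : Ω => EuclideanSpace ℝ (Fin d × Fin m)))
    (hsa : ∀ u v, ⟪A u, v⟫ = ⟪u, A v⟫)
    (h : PiLp 2 (fun _ : Ω => EuclideanSpace ℝ (Fin d × Fin m))) (c₀ : ℝ)
    (D : PiLp 2 (fun _ : Ω => EuclideanSpace ℝ (Fin d × Fin m)) → ℝ)
    (hD : ∀ p, D p = (1 / 2) * ⟪A p, p⟫ - ⟪h, p⟫ + c₀)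
    (lam τ : ℝ) (hlam : 0 < lam) (hτ : 0 < τ)
    (p0 p1 ξ : PiLp 2 (fun _ : Ω => EuclideanSpace ℝ (Fin d × Fin m)))
    (hξ : ξ = A p0 - h)
    (hupdate : ∀ x : Ω, p1 x = p0 x - τ • (ξ x + (‖ξ x‖ / lam) • p1 x))
    (hfeas : ∀ x : Ω, ‖p1 x‖ ≤ lam) :
    D p0 - D p1 ≥ (1 / (2 * τ)) * (1 - τ * ‖A‖) * ‖p0 - p1‖ ^ 2 := by
  have hball : ‖p0 - p1 - τ • ξ‖ ≤ ‖τ • ξ‖ := PiLp.norm_le_norm_of_forall fun x =>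
    norm_sub_smul_le_of_semiImplicit_step hlam hτ.le (hupdate x) (hfeas x)
  have hdescent : ‖p0 - p1‖ ^ 2 / (2 * τ) ≤ ⟪ξ, p0 - p1⟫ := by
    rw [div_le_iff₀' (by positivity), mul_assoc, ← real_inner_smul_left]
    exact norm_sq_le_two_mul_inner_of_norm_sub_le hball
  have hcurv := inner_apply_self_le_opNorm_mul_norm_sq A (p0 - p1)
  have hrhs : (1 / (2 * τ)) * (1 - τ * ‖A‖) * ‖p0 - p1‖ ^ 2
      = ‖p0 - p1‖ ^ 2 / (2 * τ) - (1 / 2) * (‖A‖ * ‖p0 - p1‖ ^ 2) := by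
    field_simp
  rw [LinearMap.IsSymmetric.quadratic_sub_eq hsa h c₀ hD, ← hξ, hrhs]
  linarith

theorem chambolle_energy_decrease
    (Ω : Type*) [Fintype Ω] (d m : ℕ)
    (A : PiLp 2 (fun _ : Ω => EuclideanSpace ℝ (Fin d × Fin m)) →L[ℝ]
         PiLp 2 (fun _ : Ω => EuclideanSpace ℝ (Fin d × Fin m)))
    (hsa : ∀ u v, ⟪A u, v⟫ = ⟪u, A v⟫)
    (hnonneg : ∀ u, 0 ≤ ⟪A u, u⟫)
    (h : PiLp 2 (fun _ : Ω => EuclideanSpace ℝ (Fin d × Fin m))) (c₀ : ℝ)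
    (D : PiLp 2 (fun _ : Ω => EuclideanSpace ℝ (Fin d × Fin m)) → ℝ)
    (hD : ∀ p, D p = (1 / 2) * ⟪A p, p⟫ - ⟪h, p⟫ + c₀)
    (lam τ : ℝ) (hlam : 0 < lam) (hτ : 0 < τ)
    (hτA : τ * ‖A‖ < 1)
    (p0 p1 ξ : PiLp 2 (fun _ : Ω => EuclideanSpace ℝ (Fin d × Fin m)))
    (hξ : ξ = A p0 - h)
    (hupdate : ∀ x : Ω, p1 x = p0 x - τ • (ξ x + (‖ξ x‖ / lam) • p1 x))
    (hfeas : ∀ x : Ω, ‖p1 x‖ ≤ lam) :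
    D p0 - D p1 ≥ (1 / (2 * τ)) * (1 - τ * ‖A‖) * ‖p0 - p1‖ ^ 2 :=
  chambolle_energy_decrease_general Ω d m A hsa h c₀ D hD lam τ hlam hτ p0 p1 ξ hξ hupdate hfeas
end
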